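/- If X is a midconvex subset of a periodic (torsion) abelian group G and x ∈ X, then the set X - x = {y - x : y ∈ X} is a subgroup of G. -/

import Mathlib

def Midconvex {G : Type*} [AddCommGroup G] (X : Set G) : Prop :=
  ∀ x ∈ X, ∀ y ∈ X, ∀ z : G, 2 • z = x + y → z ∈ X

/-!
After translating, `0 ∈ X`, so `X` is closed under halving (`z` is the midpoint of `0` and `2 • z`)
and, by induction on `s`, under adding elements killed by `2 ^ s`. For `y ∈ X` of finite order,
pigeonhole gives `2 ^ i • y = 2 ^ j • y` with `i < j`; then `2 ^ (j - i) • y` differs from `y` by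
an element killed by `2 ^ i`, so it lies in `X`, and halving it gives `2 • y ∈ X`. Hence `a + b`,
the midpoint of `2 • a` and `2 • b`, lies in `X`, and a submonoid of a torsion group is a subgroup.
-/

namespace Midconvex

variable {G : Type*} [AddCommGroup G] {X : Set G}

lemma image_sub (hX : Midconvex X) (x : G) : Midconvex ((· - x) '' X) := by
  rintro _ ⟨u, hu, rfl⟩ _ ⟨v, hv, rfl⟩ z hz
  refine ⟨z + x, hX u hu v hv _ ?_, add_sub_cancel_right z x⟩
  rw [smul_add, hz]
  module

lemma mem_of_two_nsmul_mem (hX : Midconvex X) (h0 : 0 ∈ X) {z : G} (hz : 2 • z ∈ X) :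
    z ∈ X :=
  hX 0 h0 _ hz z (zero_add _).symm

lemma mem_of_two_pow_nsmul_mem (hX : Midconvex X) (h0 : 0 ∈ X) :
    ∀ (k : ℕ) {z : G}, 2 ^ k • z ∈ X → z ∈ X
  | 0, z, hz => by rwa [pow_zero, one_smul] at hz
  | k + 1, z, hz => by
    rw [pow_succ', mul_nsmul] at hz
    exact hX.mem_of_two_nsmul_mem h0 (hX.mem_of_two_pow_nsmul_mem h0 k hz)

lemma add_mem_of_two_pow_nsmul_eq_zero (hX : Midconvex X) {a : G} (ha : a ∈ X) :
    ∀ (s : ℕ) {t : G}, 2 ^ s • t = 0 → a + t ∈ X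
  | 0, t, ht => by rw [pow_zero, one_smul] at ht; rwa [ht, add_zero]
  | s + 1, t, ht => by
    rw [pow_succ', mul_nsmul] at ht
    refine hX a ha _ (hX.add_mem_of_two_pow_nsmul_eq_zero ha s ht) _ ?_
    rw [smul_add, two_nsmul a]
    abel

lemma two_nsmul_mem (hX : Midconvex X) (h0 : 0 ∈ X) {y : G} (hy : IsOfFinAddOrder y)
    (hyX : y ∈ X) : 2 • y ∈ X := by
  obtain ⟨i, j, hij, hpow⟩ := hy.finite_zmultiples.exists_lt_map_eq_of_forall_mem
    (f := fun n : ℕ ↦ 2 ^ n • y) fun n ↦ nsmul_mem (AddSubgroup.mem_zmultiples y) _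
  obtain ⟨k, rfl⟩ := Nat.exists_eq_add_of_lt hij
  have hshift : 2 ^ i • (2 ^ (k + 1) • y - y) = 0 := by
    rw [smul_sub, smul_smul, ← pow_add, ← add_assoc, hpow, sub_self]
  have hmem : 2 ^ (k + 1) • y ∈ X := by
    simpa using hX.add_mem_of_two_pow_nsmul_eq_zero hyX i hshift
  rw [pow_succ', mul_nsmul] at hmem
  exact hX.mem_of_two_pow_nsmul_mem h0 k hmem

lemma add_mem (hX : Midconvex X) (h0 : 0 ∈ X) (htor : IsAddTorsion G) {a b : G}
    (ha : a ∈ X) (hb : b ∈ X) : a + b ∈ X :=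
  hX _ (hX.two_nsmul_mem h0 (htor a) ha) _ (hX.two_nsmul_mem h0 (htor b) hb) _ (smul_add 2 a b)

lemma exists_addSubgroup_coe_eq (hX : Midconvex X) (h0 : 0 ∈ X)
    (htor : IsAddTorsion G) : ∃ H : AddSubgroup G, (H : Set G) = X := by
  let S : AddSubmonoid G :=
    { carrier := X
      zero_mem' := h0
      add_mem' := hX.add_mem h0 htor }
  refine ⟨{ S with neg_mem' := fun {a} ha ↦ ?_ }, rfl⟩
  have hneg : -a ∈ AddSubmonoid.multiples a :=
    (htor a).mem_multiples_iff_mem_zmultiples.2 (neg_mem (AddSubgroup.mem_zmultiples a))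
  exact AddSubmonoid.multiples_le.2 ha hneg

end Midconvex

theorem stmt_4 {G : Type*} [AddCommGroup G]
    (htor : ∀ g : G, ∃ n : ℕ, 0 < n ∧ n • g = 0)
    (X : Set G) (hX : Midconvex X) (x : G) (hx : x ∈ X) :
    ∃ H : AddSubgroup G, (H : Set G) = (· - x) '' X :=
  (hX.image_sub x).exists_addSubgroup_coe_eq ⟨x, hx, sub_self x⟩
    fun g ↦ isOfFinAddOrder_iff_nsmul_eq_zero.2 (htor g)
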